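/- Let ρ and σ be density operators on a finite-dimensional complex Hilbert space. Then the quantum relative entropy satisfies D(ρ‖σ) ≥ tr((ρ − 9σ)₊), where (X)₊ denotes the positive part of X. -/

import Mathlib

/-!
Let `P` be the spectral projection of `ρ - 9σ` onto its nonnegative part, `a = tr Pρ` and
`b = tr Pσ`, so that `tr (ρ - 9σ)₊ = a - 9b`. In eigenbases `ρ = ∑ rᵢ |uᵢ⟩⟨uᵢ|`,
`σ = ∑ sⱼ |vⱼ⟩⟨vⱼ|`, both `D(ρ‖σ)` and `F = tr √ρ √σ` are sums against the weights
`|⟨uᵢ, vⱼ⟩|²`, and `log x ≤ x - 1` applied to `√(sⱼ / rᵢ)` termwise gives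
`D(ρ‖σ) · ln 2 ≥ 2 (1 - F)`. Cauchy–Schwarz for the Hilbert–Schmidt inner product on the blocks
`P` and `1 - P` gives `F ≤ √(ab) + √((1 - a)(1 - b))`, hence `2 (1 - F) ≥ (√a - √b)²`.
Finally `(x² - 9y²) ln 2 ≤ (x - y)²` for all real `x, y`, because `(1 - ln 2)(1 + 9 ln 2) ≥ 1`.
-/

open Matrix
open scoped ComplexOrder Classical

/-- Functional calculus for Hermitian matrices via the spectral theorem
(junk value `0` for non-Hermitian input). -/
noncomputable def matFun {n : ℕ} (f : ℝ → ℝ) (A : Matrix (Fin n) (Fin n) ℂ) :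
    Matrix (Fin n) (Fin n) ℂ :=
  if h : A.IsHermitian then
    (h.eigenvectorUnitary : Matrix (Fin n) (Fin n) ℂ) *
      diagonal (fun i => (f (h.eigenvalues i) : ℂ)) *
      (star (h.eigenvectorUnitary : Matrix (Fin n) (Fin n) ℂ))
  else 0

/-- Base-2 matrix logarithm on the support (`log₂ 0 := 0` on the kernel, which is
Mathlib's convention `Real.logb 2 0 = 0`). -/
noncomputable def matLog {n : ℕ} (A : Matrix (Fin n) (Fin n) ℂ) :
    Matrix (Fin n) (Fin n) ℂ :=
  matFun (Real.logb 2) A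

/-- The trace of the positive part of a Hermitian matrix: the sum of its
nonnegative eigenvalues. -/
noncomputable def posPartTrace {n : ℕ} (A : Matrix (Fin n) (Fin n) ℂ) : ℝ :=
  if h : A.IsHermitian then ∑ i, max (h.eigenvalues i) 0 else 0

/-- Quantum relative entropy `D(ρ‖σ) = tr(ρ(log₂ρ − log₂σ))` (base 2), valued in
`EReal`; it is `+∞` unless `supp(ρ) ⊆ supp(σ)` (expressed as kernel containment
`ker σ ⊆ ker ρ`, equivalent for positive semidefinite matrices). -/

noncomputable def qRelEnt {n : ℕ} (ρ σ : Matrix (Fin n) (Fin n) ℂ) : EReal :=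
  if ∀ v : Fin n → ℂ, σ *ᵥ v = 0 → ρ *ᵥ v = 0 then
    (((ρ * (matLog ρ - matLog σ)).trace.re : ℝ) : EReal)
  else ⊤

theorem two_mul_sub_sqrt_mul_sqrt_le_mul_log_sub {r s : ℝ} (hr : 0 ≤ r) (hs : 0 ≤ s)
    (hrs : s = 0 → r = 0) : 2 * (r - √r * √s) ≤ r * (Real.log r - Real.log s) := by
  rcases hr.eq_or_lt with rfl | hr
  · simp
  have hs : 0 < s := hs.lt_of_ne fun h => hr.ne' (hrs h.symm)
  have hlog := Real.log_le_sub_one_of_pos (div_pos (Real.sqrt_pos.mpr hs) (Real.sqrt_pos.mpr hr))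
  rw [Real.log_div (Real.sqrt_pos.mpr hs).ne' (Real.sqrt_pos.mpr hr).ne', Real.log_sqrt hs.le,
    Real.log_sqrt hr.le] at hlog
  have h := mul_le_mul_of_nonneg_left hlog (by positivity : 0 ≤ 2 * r)
  have hr' : r * (√s / √r) = √r * √s := by
    rw [mul_div_assoc', div_eq_iff (Real.sqrt_pos.mpr hr).ne', mul_comm √r, mul_assoc,
      Real.mul_self_sqrt hr.le, mul_comm]
  linarith [hr']

theorem two_mul_one_sub_sum_le_sum_mul_log_sub {ι : Type*} [Fintype ι] {c : ι → ι → ℝ}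
    {r s : ι → ℝ} (hc : ∀ i j, 0 ≤ c i j) (hr : ∀ i, 0 ≤ r i) (hs : ∀ j, 0 ≤ s j)
    (hone : ∑ i, ∑ j, c i j * r i = 1) (hsupp : ∀ i j, s j = 0 → r i * c i j = 0) :
    2 * (1 - ∑ i, ∑ j, c i j * (√(r i) * √(s j))) ≤
      ∑ i, ∑ j, c i j * (r i * (Real.log (r i) - Real.log (s j))) := by
  have hterm : ∀ i j, c i j * (2 * (r i - √(r i) * √(s j))) ≤
      c i j * (r i * (Real.log (r i) - Real.log (s j))) := by
    intro i j
    rcases (hc i j).eq_or_lt with hc0 | hc0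
    · rw [← hc0, zero_mul, zero_mul]
    exact mul_le_mul_of_nonneg_left (two_mul_sub_sqrt_mul_sqrt_le_mul_log_sub (hr i) (hs j)
      fun h => (mul_eq_zero.mp (hsupp i j h)).resolve_right hc0.ne') hc0.le
  calc 2 * (1 - ∑ i, ∑ j, c i j * (√(r i) * √(s j)))
      = ∑ i, ∑ j, c i j * (2 * (r i - √(r i) * √(s j))) := by
        simp only [← hone, ← Finset.sum_sub_distrib, Finset.mul_sum]
        ring_nf
    _ ≤ _ := Finset.sum_le_sum fun i _ => Finset.sum_le_sum fun j _ => hterm i j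

theorem sq_sqrt_sub_sqrt_le_two_mul_one_sub {a b t : ℝ} (ha : a ∈ Set.Icc 0 1)
    (hb : b ∈ Set.Icc 0 1) (ht : t ≤ √a * √b + √(1 - a) * √(1 - b)) :
    (√a - √b) ^ 2 ≤ 2 * (1 - t) := by
  have h := two_mul_le_add_sq √(1 - a) √(1 - b)
  rw [Real.sq_sqrt (sub_nonneg.mpr ha.2), Real.sq_sqrt (sub_nonneg.mpr hb.2)] at h
  rw [sub_sq, Real.sq_sqrt ha.1, Real.sq_sqrt hb.1]
  linarith

theorem sub_nine_mul_sq_mul_log_two_le (x y : ℝ) :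
    (x ^ 2 - 9 * y ^ 2) * Real.log 2 ≤ (x - y) ^ 2 := by
  have hl := Real.log_two_lt_d9
  have hu := Real.log_two_gt_d9
  nlinarith [sq_nonneg (x - 4 * y), sq_nonneg y]

theorem sub_nine_mul_mul_log_two_le_two_mul_one_sub {a b t : ℝ} (ha : a ∈ Set.Icc 0 1)
    (hb : b ∈ Set.Icc 0 1) (ht : t ≤ √a * √b + √(1 - a) * √(1 - b)) :
    (a - 9 * b) * Real.log 2 ≤ 2 * (1 - t) := by
  have h := sub_nine_mul_sq_mul_log_two_le √a √b
  rw [Real.sq_sqrt ha.1, Real.sq_sqrt hb.1] at h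
  linarith [sq_sqrt_sub_sqrt_le_two_mul_one_sub ha hb ht]

namespace Matrix

variable {ι : Type*} [Fintype ι]

theorem trace_mul_mul_self_of_isIdempotentElem {R : Type*} [CommSemiring R] {P : Matrix ι ι R}
    (hP : IsIdempotentElem P) (M : Matrix ι ι R) : (P * M * P).trace = (P * M).trace := by
  rw [trace_mul_comm, ← Matrix.mul_assoc, hP.eq]

theorem re_trace_mul_nonneg {P : Matrix ι ι ℂ} (hP : IsStarProjection P)
    {ρ : Matrix ι ι ℂ} (hρ : ρ.PosSemidef) :
    0 ≤ (P * ρ).trace.re := by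
  have h := (hρ.mul_mul_conjTranspose_same P).trace_nonneg
  rw [← star_eq_conjTranspose, hP.isSelfAdjoint.star_eq,
    trace_mul_mul_self_of_isIdempotentElem hP.isIdempotentElem] at h
  exact (Complex.nonneg_iff.mp h).1

variable [DecidableEq ι]

theorem trace_diagonal_mul_mul_diagonal_mul_conjTranspose (N : Matrix ι ι ℂ) (x y : ι → ℝ) :
    (diagonal (fun i => (x i : ℂ)) * N * diagonal (fun j => (y j : ℂ)) * Nᴴ).trace =
      ((∑ i, ∑ j, x i * y j * Complex.normSq (N i j) : ℝ) : ℂ) := by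
  simp only [trace, diag_apply, mul_apply (N := Nᴴ), diagonal_mul, mul_diagonal,
    conjTranspose_apply]
  push_cast
  refine Finset.sum_congr rfl fun i _ => Finset.sum_congr rfl fun j _ => ?_
  rw [← Complex.mul_conj, Complex.star_def]
  ring

theorem trace_conj_diagonal_mul_conj_diagonal (U V : Matrix ι ι ℂ) (x y : ι → ℝ) :
    (U * diagonal (fun i => (x i : ℂ)) * Uᴴ * (V * diagonal (fun j => (y j : ℂ)) * Vᴴ)).trace =
      ((∑ i, ∑ j, x i * y j * Complex.normSq ((Uᴴ * V) i j) : ℝ) : ℂ) := by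
  rw [← trace_diagonal_mul_mul_diagonal_mul_conjTranspose]
  simp only [conjTranspose_mul, conjTranspose_conjTranspose, Matrix.mul_assoc]
  rw [trace_mul_comm U]
  simp only [Matrix.mul_assoc]

theorem sum_normSq_apply_of_mem_unitaryGroup {U : Matrix ι ι ℂ} (hU : U ∈ unitaryGroup ι ℂ)
    (i : ι) : ∑ j, Complex.normSq (U i j) = 1 := by
  have h := congr_fun (congr_fun (mem_unitaryGroup_iff.mp hU) i) i
  simp only [mul_apply, star_apply, one_apply_eq, Complex.star_def, Complex.mul_conj] at h
  exact_mod_cast h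

theorem re_trace_mul_conjTranspose_le (X Y : Matrix ι ι ℂ) :
    (Y * Xᴴ).trace.re ≤ √(X * Xᴴ).trace.re * √(Y * Yᴴ).trace.re := by
  let := toMatrixSeminormedAddCommGroup (1 : Matrix ι ι ℂ) PosSemidef.one
  let := toMatrixInnerProductSpace (1 : Matrix ι ι ℂ) PosSemidef.one
  have hinner : ∀ Z W : Matrix ι ι ℂ, inner ℂ Z W = (W * Zᴴ).trace := fun Z W => by
    change (W * 1 * Zᴴ).trace = _
    rw [Matrix.mul_one]
  have h := re_inner_le_norm (𝕜 := ℂ) X Y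
  rw [norm_eq_sqrt_re_inner (𝕜 := ℂ), norm_eq_sqrt_re_inner (𝕜 := ℂ), hinner, hinner, hinner] at h
  exact h

theorem re_trace_one_sub_mul {ρ : Matrix ι ι ℂ} (hρ1 : ρ.trace = 1) (P : Matrix ι ι ℂ) :
    ((1 - P) * ρ).trace.re = 1 - (P * ρ).trace.re := by
  rw [Matrix.sub_mul, Matrix.one_mul, trace_sub, hρ1, Complex.sub_re, Complex.one_re]

variable {P : Matrix ι ι ℂ}

theorem re_trace_mul_mem_Icc (hP : IsStarProjection P) {ρ : Matrix ι ι ℂ} (hρ : ρ.PosSemidef)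
    (hρ1 : ρ.trace = 1) : (P * ρ).trace.re ∈ Set.Icc 0 1 := by
  have h := re_trace_mul_nonneg hP.one_sub hρ
  rw [re_trace_one_sub_mul hρ1] at h
  exact ⟨re_trace_mul_nonneg hP hρ, sub_nonneg.mp h⟩

theorem re_trace_mul_mul_le (hP : IsStarProjection P) {X Y : Matrix ι ι ℂ} (hX : X.IsHermitian)
    (hY : Y.IsHermitian) :
    (P * X * Y).trace.re ≤ √(P * (X * X)).trace.re * √(P * (Y * Y)).trace.re := by
  have hPX : (P * X)ᴴ = X * P := by
    rw [conjTranspose_mul, hX.eq, ← star_eq_conjTranspose, hP.isSelfAdjoint.star_eq]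
  have hPY : (P * Y)ᴴ = Y * P := by
    rw [conjTranspose_mul, hY.eq, ← star_eq_conjTranspose, hP.isSelfAdjoint.star_eq]
  have hsandwich : ∀ M N : Matrix ι ι ℂ, (P * M * (N * P)).trace = (P * (M * N)).trace := by
    intro M N
    rw [← trace_mul_mul_self_of_isIdempotentElem hP.isIdempotentElem]
    simp only [Matrix.mul_assoc]
  have h := re_trace_mul_conjTranspose_le (P * Y) (P * X)
  rw [hPX, hPY, hsandwich, hsandwich, hsandwich] at h
  rw [Matrix.mul_assoc, mul_comm]
  exact h

namespace IsHermitian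

variable {A B : Matrix ι ι ℂ}

noncomputable def eigenOverlap (hA : A.IsHermitian) (hB : B.IsHermitian) (i j : ι) : ℝ :=
  Complex.normSq ((star (hA.eigenvectorUnitary : Matrix ι ι ℂ) * hB.eigenvectorUnitary) i j)

theorem eigenOverlap_nonneg (hA : A.IsHermitian) (hB : B.IsHermitian) (i j : ι) :
    0 ≤ hA.eigenOverlap hB i j :=
  Complex.normSq_nonneg _

theorem sum_eigenOverlap_right (hA : A.IsHermitian) (hB : B.IsHermitian) (i : ι) :
    ∑ j, hA.eigenOverlap hB i j = 1 :=
  sum_normSq_apply_of_mem_unitaryGroup (star hA.eigenvectorUnitary * hB.eigenvectorUnitary).2 i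

theorem star_eigenvectorUnitary_mul (hA : A.IsHermitian) :
    star (hA.eigenvectorUnitary : Matrix ι ι ℂ) * A =
      diagonal (fun i => (hA.eigenvalues i : ℂ)) * star (hA.eigenvectorUnitary : Matrix ι ι ℂ) := by
  have h := hA.conjStarAlgAut_star_eigenvectorUnitary
  rw [Unitary.conjStarAlgAut_apply, Unitary.coe_star, star_star] at h
  rw [← Matrix.mul_one (_ * A), ← Unitary.coe_mul_star_self hA.eigenvectorUnitary,
    ← Matrix.mul_assoc, h]
  rfl

theorem eigenvalues_mul_eigenOverlap_eq_zero (hA : A.IsHermitian) (hB : B.IsHermitian)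
    (hker : ∀ v, B *ᵥ v = 0 → A *ᵥ v = 0) {j : ι} (hj : hB.eigenvalues j = 0) (i : ι) :
    hA.eigenvalues i * hA.eigenOverlap hB i j = 0 := by
  -- `vⱼ ∈ ker B ⊆ ker A`, and pairing `A vⱼ = 0` with `uᵢ` gives `λᵢ ⟨uᵢ, vⱼ⟩ = 0`.
  have hBv : B *ᵥ ⇑(hB.eigenvectorBasis j) = 0 := by
    rw [hB.mulVec_eigenvectorBasis, hj, zero_smul]
  have h := congr_fun (congr_arg (star (hA.eigenvectorUnitary : Matrix ι ι ℂ) *ᵥ ·) (hker _ hBv)) i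
  simp only [mulVec_zero, mulVec_mulVec, star_eigenvectorUnitary_mul] at h
  rw [← mulVec_mulVec, mulVec_diagonal] at h
  have hN : (star (hA.eigenvectorUnitary : Matrix ι ι ℂ) *ᵥ ⇑(hB.eigenvectorBasis j)) i =
      (star (hA.eigenvectorUnitary : Matrix ι ι ℂ) * hB.eigenvectorUnitary) i j := rfl
  rw [hN] at h
  rcases mul_eq_zero.mp h with h | h
  · simp [Complex.ofReal_eq_zero.mp h]
  · simp [eigenOverlap, h]

end IsHermitian

end Matrix

section MatFun

variable {n : ℕ} {A B ρ σ : Matrix (Fin n) (Fin n) ℂ}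

theorem matFun_of_isHermitian (hA : A.IsHermitian) (f : ℝ → ℝ) :
    matFun f A = (hA.eigenvectorUnitary : Matrix (Fin n) (Fin n) ℂ) *
      diagonal (fun i => (f (hA.eigenvalues i) : ℂ)) *
        star (hA.eigenvectorUnitary : Matrix (Fin n) (Fin n) ℂ) :=
  dif_pos hA

theorem isHermitian_matFun (f : ℝ → ℝ) (A : Matrix (Fin n) (Fin n) ℂ) :
    (matFun f A).IsHermitian := by
  by_cases hA : A.IsHermitian
  · rw [matFun_of_isHermitian hA, star_eq_conjTranspose]
    exact isHermitian_mul_mul_conjTranspose _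
      (isHermitian_diagonal_of_self_adjoint _ (funext fun i => Complex.conj_ofReal _))
  · rw [matFun, dif_neg hA]
    exact isHermitian_zero

theorem matFun_congr (hA : A.IsHermitian) {f g : ℝ → ℝ}
    (hfg : ∀ i, f (hA.eigenvalues i) = g (hA.eigenvalues i)) : matFun f A = matFun g A := by
  simp only [matFun_of_isHermitian hA, hfg]

theorem matFun_id (hA : A.IsHermitian) : matFun (fun x => x) A = A := by
  rw [matFun_of_isHermitian hA]
  conv_rhs => rw [hA.spectral_theorem]
  rfl

theorem matFun_mul_matFun (hA : A.IsHermitian) (f g : ℝ → ℝ) :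
    matFun f A * matFun g A = matFun (fun x => f x * g x) A := by
  simp only [matFun_of_isHermitian hA, Matrix.mul_assoc, ← Matrix.mul_assoc (star _),
    Unitary.coe_star_mul_self, Matrix.one_mul, Complex.ofReal_mul, ← diagonal_mul_diagonal]

theorem trace_matFun (hA : A.IsHermitian) (f : ℝ → ℝ) :
    (matFun f A).trace = ((∑ i, f (hA.eigenvalues i) : ℝ) : ℂ) := by
  rw [matFun_of_isHermitian hA, trace_mul_comm, ← Matrix.mul_assoc, Unitary.coe_star_mul_self,
    Matrix.one_mul, trace_diagonal, Complex.ofReal_sum]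

theorem trace_matFun_mul_matFun (hA : A.IsHermitian) (hB : B.IsHermitian) (f g : ℝ → ℝ) :
    (matFun f A * matFun g B).trace = ((∑ i, ∑ j,
      f (hA.eigenvalues i) * g (hB.eigenvalues j) * hA.eigenOverlap hB i j : ℝ) : ℂ) := by
  rw [matFun_of_isHermitian hA, matFun_of_isHermitian hB, star_eq_conjTranspose,
    star_eq_conjTranspose]
  exact trace_conj_diagonal_mul_conj_diagonal _ _ _ _

theorem isStarProjection_matFun (hA : A.IsHermitian) {f : ℝ → ℝ} (hf : ∀ x, f x * f x = f x) :
    IsStarProjection (matFun f A) where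
  isIdempotentElem := by
    rw [IsIdempotentElem, matFun_mul_matFun hA]
    simp only [hf]
  isSelfAdjoint := isHermitian_matFun f A

noncomputable def posPartProj (A : Matrix (Fin n) (Fin n) ℂ) : Matrix (Fin n) (Fin n) ℂ :=
  matFun (fun x => if 0 ≤ x then 1 else 0) A

theorem isStarProjection_posPartProj (hA : A.IsHermitian) : IsStarProjection (posPartProj A) :=
  isStarProjection_matFun hA fun x => by split_ifs <;> norm_num

theorem posPartTrace_eq_re_trace_posPartProj_mul (hA : A.IsHermitian) :
    posPartTrace A = (posPartProj A * A).trace.re := by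
  have h := matFun_mul_matFun hA (fun x => if 0 ≤ x then 1 else 0) (fun x => x)
  rw [matFun_id hA] at h
  rw [posPartTrace, dif_pos hA, posPartProj, h, trace_matFun hA, Complex.ofReal_re]
  refine Finset.sum_congr rfl fun i _ => ?_
  split_ifs with h
  · rw [max_eq_left h, one_mul]
  · rw [max_eq_right (not_le.mp h).le, zero_mul]

theorem matFun_sqrt_mul_self (hρ : ρ.PosSemidef) :
    matFun Real.sqrt ρ * matFun Real.sqrt ρ = ρ := by
  rw [matFun_mul_matFun hρ.1]
  conv_rhs => rw [← matFun_id hρ.1]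
  exact matFun_congr hρ.1 fun i => Real.mul_self_sqrt (hρ.eigenvalues_nonneg i)

theorem re_trace_sqrt_mul_sqrt_le (hρ : ρ.PosSemidef) (hρ1 : ρ.trace = 1) (hσ : σ.PosSemidef)
    (hσ1 : σ.trace = 1) {P : Matrix (Fin n) (Fin n) ℂ} (hP : IsStarProjection P) :
    (matFun Real.sqrt ρ * matFun Real.sqrt σ).trace.re ≤
      √(P * ρ).trace.re * √(P * σ).trace.re +
        √(1 - (P * ρ).trace.re) * √(1 - (P * σ).trace.re) := by
  have hblock : ∀ Q : Matrix (Fin n) (Fin n) ℂ, IsStarProjection Q →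
      (Q * matFun Real.sqrt ρ * matFun Real.sqrt σ).trace.re ≤
        √(Q * ρ).trace.re * √(Q * σ).trace.re := fun Q hQ => by
    simpa only [matFun_sqrt_mul_self hρ, matFun_sqrt_mul_self hσ] using
      re_trace_mul_mul_le hQ (isHermitian_matFun Real.sqrt ρ) (isHermitian_matFun Real.sqrt σ)
  have hsplit : (matFun Real.sqrt ρ * matFun Real.sqrt σ).trace.re =
      (P * matFun Real.sqrt ρ * matFun Real.sqrt σ).trace.re +
        ((1 - P) * matFun Real.sqrt ρ * matFun Real.sqrt σ).trace.re := by
    rw [← Complex.add_re, ← trace_add, ← Matrix.add_mul, ← Matrix.add_mul, add_sub_cancel,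
      Matrix.one_mul]
  rw [hsplit, ← re_trace_one_sub_mul hρ1, ← re_trace_one_sub_mul hσ1]
  exact add_le_add (hblock P hP) (hblock (1 - P) hP.one_sub)

theorem re_trace_mul_matLog_sub_matLog (hA : A.IsHermitian) (hB : B.IsHermitian) :
    (A * (matLog A - matLog B)).trace.re = ∑ i, ∑ j, hA.eigenOverlap hB i j *
      (hA.eigenvalues i * (Real.logb 2 (hA.eigenvalues i) - Real.logb 2 (hB.eigenvalues j))) := by
  have hAA : (A * matLog A).trace.re = ∑ i, ∑ j,
      hA.eigenOverlap hB i j * (hA.eigenvalues i * Real.logb 2 (hA.eigenvalues i)) := by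
    nth_rw 1 [← matFun_id hA]
    rw [matLog, matFun_mul_matFun hA, trace_matFun hA, Complex.ofReal_re]
    simp only [← Finset.sum_mul, hA.sum_eigenOverlap_right, one_mul]
  have hAB : (A * matLog B).trace.re = ∑ i, ∑ j,
      hA.eigenOverlap hB i j * (hA.eigenvalues i * Real.logb 2 (hB.eigenvalues j)) := by
    nth_rw 1 [← matFun_id hA]
    rw [matLog, trace_matFun_mul_matFun hA hB, Complex.ofReal_re]
    exact Finset.sum_congr rfl fun i _ => Finset.sum_congr rfl fun j _ => by ring
  rw [mul_sub, trace_sub, Complex.sub_re, hAA, hAB]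
  simp only [← Finset.sum_sub_distrib, ← mul_sub]

theorem two_mul_one_sub_le_log_two_mul_re_trace (hρ : ρ.PosSemidef) (hρ1 : ρ.trace = 1)
    (hσ : σ.PosSemidef) (hker : ∀ v, σ *ᵥ v = 0 → ρ *ᵥ v = 0) :
    2 * (1 - (matFun Real.sqrt ρ * matFun Real.sqrt σ).trace.re) ≤
      Real.log 2 * (ρ * (matLog ρ - matLog σ)).trace.re := by
  have hT : (matFun Real.sqrt ρ * matFun Real.sqrt σ).trace.re = ∑ i, ∑ j,
      hρ.1.eigenOverlap hσ.1 i j * (√(hρ.1.eigenvalues i) * √(hσ.1.eigenvalues j)) := by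
    rw [trace_matFun_mul_matFun hρ.1 hσ.1, Complex.ofReal_re]
    exact Finset.sum_congr rfl fun i _ => Finset.sum_congr rfl fun j _ => by ring
  have hD : Real.log 2 * (ρ * (matLog ρ - matLog σ)).trace.re = ∑ i, ∑ j,
      hρ.1.eigenOverlap hσ.1 i j * (hρ.1.eigenvalues i *
        (Real.log (hρ.1.eigenvalues i) - Real.log (hσ.1.eigenvalues j))) := by
    rw [re_trace_mul_matLog_sub_matLog hρ.1 hσ.1, Finset.mul_sum]
    refine Finset.sum_congr rfl fun i _ => ?_
    rw [Finset.mul_sum]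
    refine Finset.sum_congr rfl fun j _ => ?_
    simp only [Real.logb]
    field_simp
  have hone : ∑ i, ∑ j, hρ.1.eigenOverlap hσ.1 i j * hρ.1.eigenvalues i = 1 := by
    have h := congrArg Complex.re hρ.1.trace_eq_sum_eigenvalues
    rw [hρ1] at h
    simp only [← Finset.sum_mul, hρ.1.sum_eigenOverlap_right, one_mul]
    simpa using h.symm
  rw [hT, hD]
  exact two_mul_one_sub_sum_le_sum_mul_log_sub (hρ.1.eigenOverlap_nonneg hσ.1)
    hρ.eigenvalues_nonneg hσ.eigenvalues_nonneg hone
    fun i j hj => hρ.1.eigenvalues_mul_eigenOverlap_eq_zero hσ.1 hker hj i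

end MatFun

/-- For density operators `ρ, σ`, the quantum relative entropy satisfies
`D(ρ‖σ) ≥ tr((ρ − 9σ)₊)`. -/
theorem qRelEnt_ge_posPartTrace {n : ℕ} (ρ σ : Matrix (Fin n) (Fin n) ℂ)
    (hρ : ρ.PosSemidef) (hρ1 : ρ.trace = 1)
    (hσ : σ.PosSemidef) (hσ1 : σ.trace = 1) :
    ((posPartTrace (ρ - (9 : ℂ) • σ) : ℝ) : EReal) ≤ qRelEnt ρ σ := by
  unfold qRelEnt
  split_ifs with hker
  · have hΔ : (ρ - (9 : ℂ) • σ).IsHermitian := hρ.1.sub (hσ.smul (by norm_num)).1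
    have hP := isStarProjection_posPartProj hΔ
    have hpos : posPartTrace (ρ - (9 : ℂ) • σ) = (posPartProj (ρ - (9 : ℂ) • σ) * ρ).trace.re -
        9 * (posPartProj (ρ - (9 : ℂ) • σ) * σ).trace.re := by
      rw [posPartTrace_eq_re_trace_posPartProj_mul hΔ, mul_sub, trace_sub, Matrix.mul_smul,
        trace_smul]
      simp only [smul_eq_mul, Complex.sub_re, Complex.mul_re, Complex.re_ofNat, Complex.im_ofNat,
        zero_mul, sub_zero]
    have hfid := sub_nine_mul_mul_log_two_le_two_mul_one_sub (re_trace_mul_mem_Icc hP hρ hρ1)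
      (re_trace_mul_mem_Icc hP hσ hσ1) (re_trace_sqrt_mul_sqrt_le hρ hρ1 hσ hσ1 hP)
    have hent := two_mul_one_sub_le_log_two_mul_re_trace hρ hρ1 hσ hker
    rw [EReal.coe_le_coe_iff, hpos]
    exact le_of_mul_le_mul_right (hfid.trans (hent.trans_eq (mul_comm _ _)))
      (Real.log_pos one_lt_two)
  · exact le_top
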